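/- arXiv:0710.3464 — 2 statements merged into one kernel-verified Lean document; each statement's English description precedes it below -/
import Mathlib

section
/- Let (Q,P) be a symplectic family with a fixed point at the origin in adapted coordinates with P_qε ≠ 0 at the origin, and let (p_B, ε_B) be a B-line. Then ε_B''(0) = (3·Q_qq·P_qp − Q_p·P_qqq) / (3·Q_p·P_qε), all partial derivatives being evaluated at the origin. -/
open Set Filter Topology

/-- Partial derivative with respect to the first variable `q`. -/
noncomputable def Dq (f : ℝ → ℝ → ℝ → ℝ) (q p e : ℝ) : ℝ := deriv (fun s => f s p e) q
/-- Partial derivative with respect to the second variable `p`. -/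
noncomputable def Dp (f : ℝ → ℝ → ℝ → ℝ) (q p e : ℝ) : ℝ := deriv (fun s => f q s e) p
/-- Partial derivative with respect to the third variable `ε`. -/
noncomputable def De (f : ℝ → ℝ → ℝ → ℝ) (q p e : ℝ) : ℝ := deriv (fun s => f q p s) e

noncomputable def unc (F : ℝ → ℝ → ℝ → ℝ) : ℝ × ℝ × ℝ → ℝ := fun z => F z.1 z.2.1 z.2.2

lemma hasDerivAt_c1 (p e q : ℝ) :
    HasDerivAt (fun s : ℝ => ((s, p, e) : ℝ × ℝ × ℝ)) (1, 0, 0) q :=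
  HasDerivAt.prodMk (hasDerivAt_id q) (HasDerivAt.prodMk (hasDerivAt_const q p) (hasDerivAt_const q e))

lemma hasDerivAt_c2 (q e p : ℝ) :
    HasDerivAt (fun s : ℝ => ((q, s, e) : ℝ × ℝ × ℝ)) (0, 1, 0) p :=
  HasDerivAt.prodMk (hasDerivAt_const p q) (HasDerivAt.prodMk (hasDerivAt_id p) (hasDerivAt_const p e))

lemma hasDerivAt_c3 (q p e : ℝ) :
    HasDerivAt (fun s : ℝ => ((q, p, s) : ℝ × ℝ × ℝ)) (0, 0, 1) e :=
  HasDerivAt.prodMk (hasDerivAt_const e q) (HasDerivAt.prodMk (hasDerivAt_const e p) (hasDerivAt_id e))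

lemma Dq_eq_fderiv {F : ℝ → ℝ → ℝ → ℝ} {q p e : ℝ}
    (h : DifferentiableAt ℝ (unc F) (q, p, e)) :
    Dq F q p e = fderiv ℝ (unc F) (q, p, e) (1, 0, 0) :=
  (h.hasFDerivAt.comp_hasDerivAt (l := unc F) q (hasDerivAt_c1 p e q)).deriv

lemma Dp_eq_fderiv {F : ℝ → ℝ → ℝ → ℝ} {q p e : ℝ}
    (h : DifferentiableAt ℝ (unc F) (q, p, e)) :
    Dp F q p e = fderiv ℝ (unc F) (q, p, e) (0, 1, 0) :=
  (h.hasFDerivAt.comp_hasDerivAt (l := unc F) p (hasDerivAt_c2 q e p)).deriv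

lemma De_eq_fderiv {F : ℝ → ℝ → ℝ → ℝ} {q p e : ℝ}
    (h : DifferentiableAt ℝ (unc F) (q, p, e)) :
    De F q p e = fderiv ℝ (unc F) (q, p, e) (0, 0, 1) :=
  (h.hasFDerivAt.comp_hasDerivAt (l := unc F) e (hasDerivAt_c3 q p e)).deriv

lemma hasDerivAt_comp3 {F : ℝ → ℝ → ℝ → ℝ} {a b : ℝ → ℝ} {q a' b' : ℝ}
    (hF : DifferentiableAt ℝ (unc F) (q, a q, b q))
    (ha : HasDerivAt a a' q) (hb : HasDerivAt b b' q) :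
    HasDerivAt (fun s => F s (a s) (b s))
      (Dq F q (a q) (b q) + Dp F q (a q) (b q) * a' + De F q (a q) (b q) * b') q := by
  have hg : HasDerivAt (fun s => ((s, a s, b s) : ℝ × ℝ × ℝ)) (1, a', b') q :=
    HasDerivAt.prodMk (hasDerivAt_id q) (HasDerivAt.prodMk ha hb)
  have h := hF.hasFDerivAt.comp_hasDerivAt q hg
  have hv : ((1 : ℝ), a', b') =
      ((1:ℝ), (0:ℝ), (0:ℝ)) + a' • ((0:ℝ), (1:ℝ), (0:ℝ)) + b' • ((0:ℝ), (0:ℝ), (1:ℝ)) := by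
    simp [Prod.ext_iff]
  rw [hv, map_add, map_add, map_smul, map_smul] at h
  simpa [Dq_eq_fderiv hF, Dp_eq_fderiv hF, De_eq_fderiv hF, smul_eq_mul, mul_comm] using (show HasDerivAt (fun s => F s (a s) (b s)) _ q from h)

section Smooth

variable {U : Set (ℝ×ℝ×ℝ)} {F : ℝ → ℝ → ℝ → ℝ}

lemma diffAt_of_mem {z : ℝ×ℝ×ℝ} (hU : IsOpen U)
    (hF : ContDiffOn ℝ ((⊤ : ℕ∞) : WithTop ℕ∞) (unc F) U) (hz : z ∈ U) :
    DifferentiableAt ℝ (unc F) z :=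
  (hF.differentiableOn (by norm_num)).differentiableAt (hU.mem_nhds hz)

lemma contDiffOn_unc_Dq (hU : IsOpen U)
    (hF : ContDiffOn ℝ ((⊤ : ℕ∞) : WithTop ℕ∞) (unc F) U) :
    ContDiffOn ℝ ((⊤ : ℕ∞) : WithTop ℕ∞) (unc (Dq F)) U := by
  have h1 : ContDiffOn ℝ ((⊤ : ℕ∞) : WithTop ℕ∞) (fderiv ℝ (unc F)) U :=
    hF.fderiv_of_isOpen hU (by simp)
  have h2 := h1.clm_apply (contDiffOn_const (c := ((1:ℝ),(0:ℝ),(0:ℝ))))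
  exact h2.congr fun z hz => by
    rw [show z = (z.1, z.2.1, z.2.2) from rfl] at hz ⊢
    exact Dq_eq_fderiv (diffAt_of_mem hU hF hz)

lemma contDiffOn_unc_Dp (hU : IsOpen U)
    (hF : ContDiffOn ℝ ((⊤ : ℕ∞) : WithTop ℕ∞) (unc F) U) :
    ContDiffOn ℝ ((⊤ : ℕ∞) : WithTop ℕ∞) (unc (Dp F)) U := by
  have h1 : ContDiffOn ℝ ((⊤ : ℕ∞) : WithTop ℕ∞) (fderiv ℝ (unc F)) U :=
    hF.fderiv_of_isOpen hU (by simp)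
  have h2 := h1.clm_apply (contDiffOn_const (c := ((0:ℝ),(1:ℝ),(0:ℝ))))
  exact h2.congr fun z hz => by
    rw [show z = (z.1, z.2.1, z.2.2) from rfl] at hz ⊢
    exact Dp_eq_fderiv (diffAt_of_mem hU hF hz)

lemma contDiffOn_unc_De (hU : IsOpen U)
    (hF : ContDiffOn ℝ ((⊤ : ℕ∞) : WithTop ℕ∞) (unc F) U) :
    ContDiffOn ℝ ((⊤ : ℕ∞) : WithTop ℕ∞) (unc (De F)) U := by
  have h1 : ContDiffOn ℝ ((⊤ : ℕ∞) : WithTop ℕ∞) (fderiv ℝ (unc F)) U :=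
    hF.fderiv_of_isOpen hU (by simp)
  have h2 := h1.clm_apply (contDiffOn_const (c := ((0:ℝ),(0:ℝ),(1:ℝ))))
  exact h2.congr fun z hz => by
    rw [show z = (z.1, z.2.1, z.2.2) from rfl] at hz ⊢
    exact De_eq_fderiv (diffAt_of_mem hU hF hz)

lemma clairaut_qp (hU : IsOpen U)
    (hF : ContDiffOn ℝ ((⊤ : ℕ∞) : WithTop ℕ∞) (unc F) U) {q p e : ℝ} (hz : (q,p,e) ∈ U) :
    Dp (Dq F) q p e = Dq (Dp F) q p e := by
  have h1 : ContDiffOn ℝ ((⊤ : ℕ∞) : WithTop ℕ∞) (fderiv ℝ (unc F)) U :=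
    hF.fderiv_of_isOpen hU (by simp)
  have hd1 : DifferentiableAt ℝ (fderiv ℝ (unc F)) (q,p,e) :=
    (h1.differentiableOn (by norm_num)).differentiableAt (hU.mem_nhds hz)
  set f'' := fderiv ℝ (fderiv ℝ (unc F)) (q,p,e) with hf''
  have hA : Dp (Dq F) q p e = f'' (0,1,0) (1,0,0) := by
    have hcurve : HasDerivAt (fun s => fderiv ℝ (unc F) (q,s,e)) (f'' (0,1,0)) p :=
      hd1.hasFDerivAt.comp_hasDerivAt p (hasDerivAt_c2 q e p)
    have happ : HasDerivAt (fun s => fderiv ℝ (unc F) (q,s,e) ((1:ℝ),(0:ℝ),(0:ℝ)))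
        (f'' (0,1,0) (1,0,0)) p := by
      simpa using hcurve.clm_apply (hasDerivAt_const p ((1:ℝ),(0:ℝ),(0:ℝ)))
    have hev : (fun s => Dq F q s e) =ᶠ[𝓝 p]
        (fun s => fderiv ℝ (unc F) (q,s,e) ((1:ℝ),(0:ℝ),(0:ℝ))) := by
      have hcont : ContinuousAt (fun s : ℝ => ((q,s,e) : ℝ×ℝ×ℝ)) p := by fun_prop
      filter_upwards [hcont.preimage_mem_nhds (hU.mem_nhds hz)] with s hs
      exact Dq_eq_fderiv (diffAt_of_mem hU hF hs)
    show deriv (fun s => Dq F q s e) p = _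
    rw [hev.deriv_eq, happ.deriv]
  have hB : Dq (Dp F) q p e = f'' (1,0,0) (0,1,0) := by
    have hcurve : HasDerivAt (fun s => fderiv ℝ (unc F) (s,p,e)) (f'' (1,0,0)) q :=
      hd1.hasFDerivAt.comp_hasDerivAt q (hasDerivAt_c1 p e q)
    have happ : HasDerivAt (fun s => fderiv ℝ (unc F) (s,p,e) ((0:ℝ),(1:ℝ),(0:ℝ)))
        (f'' (1,0,0) (0,1,0)) q := by
      simpa using hcurve.clm_apply (hasDerivAt_const q ((0:ℝ),(1:ℝ),(0:ℝ)))
    have hev : (fun s => Dp F s p e) =ᶠ[𝓝 q]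
        (fun s => fderiv ℝ (unc F) (s,p,e) ((0:ℝ),(1:ℝ),(0:ℝ))) := by
      have hcont : ContinuousAt (fun s : ℝ => ((s,p,e) : ℝ×ℝ×ℝ)) q := by fun_prop
      filter_upwards [hcont.preimage_mem_nhds (hU.mem_nhds hz)] with s hs
      exact Dp_eq_fderiv (diffAt_of_mem hU hF hs)
    show deriv (fun s => Dp F s p e) q = _
    rw [hev.deriv_eq, happ.deriv]
  rw [hA, hB]
  exact second_derivative_symmetric_of_eventually
    (f := unc F) (f' := fderiv ℝ (unc F))
    (by filter_upwards [hU.mem_nhds hz] with y hy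
        exact (diffAt_of_mem hU hF hy).hasFDerivAt)
    hd1.hasFDerivAt _ _

lemma clairaut_qe (hU : IsOpen U)
    (hF : ContDiffOn ℝ ((⊤ : ℕ∞) : WithTop ℕ∞) (unc F) U) {q p e : ℝ} (hz : (q,p,e) ∈ U) :
    De (Dq F) q p e = Dq (De F) q p e := by
  have h1 : ContDiffOn ℝ ((⊤ : ℕ∞) : WithTop ℕ∞) (fderiv ℝ (unc F)) U :=
    hF.fderiv_of_isOpen hU (by simp)
  have hd1 : DifferentiableAt ℝ (fderiv ℝ (unc F)) (q,p,e) :=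
    (h1.differentiableOn (by norm_num)).differentiableAt (hU.mem_nhds hz)
  set f'' := fderiv ℝ (fderiv ℝ (unc F)) (q,p,e) with hf''
  have hA : De (Dq F) q p e = f'' (0,0,1) (1,0,0) := by
    have hcurve : HasDerivAt (fun s => fderiv ℝ (unc F) (q,p,s)) (f'' (0,0,1)) e :=
      hd1.hasFDerivAt.comp_hasDerivAt e (hasDerivAt_c3 q p e)
    have happ : HasDerivAt (fun s => fderiv ℝ (unc F) (q,p,s) ((1:ℝ),(0:ℝ),(0:ℝ)))
        (f'' (0,0,1) (1,0,0)) e := by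
      simpa using hcurve.clm_apply (hasDerivAt_const e ((1:ℝ),(0:ℝ),(0:ℝ)))
    have hev : (fun s => Dq F q p s) =ᶠ[𝓝 e]
        (fun s => fderiv ℝ (unc F) (q,p,s) ((1:ℝ),(0:ℝ),(0:ℝ))) := by
      have hcont : ContinuousAt (fun s : ℝ => ((q,p,s) : ℝ×ℝ×ℝ)) e := by fun_prop
      filter_upwards [hcont.preimage_mem_nhds (hU.mem_nhds hz)] with s hs
      exact Dq_eq_fderiv (diffAt_of_mem hU hF hs)
    show deriv (fun s => Dq F q p s) e = _
    rw [hev.deriv_eq, happ.deriv]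
  have hB : Dq (De F) q p e = f'' (1,0,0) (0,0,1) := by
    have hcurve : HasDerivAt (fun s => fderiv ℝ (unc F) (s,p,e)) (f'' (1,0,0)) q :=
      hd1.hasFDerivAt.comp_hasDerivAt q (hasDerivAt_c1 p e q)
    have happ : HasDerivAt (fun s => fderiv ℝ (unc F) (s,p,e) ((0:ℝ),(0:ℝ),(1:ℝ)))
        (f'' (1,0,0) (0,0,1)) q := by
      simpa using hcurve.clm_apply (hasDerivAt_const q ((0:ℝ),(0:ℝ),(1:ℝ)))
    have hev : (fun s => De F s p e) =ᶠ[𝓝 q]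
        (fun s => fderiv ℝ (unc F) (s,p,e) ((0:ℝ),(0:ℝ),(1:ℝ))) := by
      have hcont : ContinuousAt (fun s : ℝ => ((s,p,e) : ℝ×ℝ×ℝ)) q := by fun_prop
      filter_upwards [hcont.preimage_mem_nhds (hU.mem_nhds hz)] with s hs
      exact De_eq_fderiv (diffAt_of_mem hU hF hs)
    show deriv (fun s => De F s p e) q = _
    rw [hev.deriv_eq, happ.deriv]
  rw [hA, hB]
  exact second_derivative_symmetric_of_eventually
    (f := unc F) (f' := fderiv ℝ (unc F))
    (by filter_upwards [hU.mem_nhds hz] with y hy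
        exact (diffAt_of_mem hU hF hy).hasFDerivAt)
    hd1.hasFDerivAt _ _

end Smooth

/-- Along a `B`-line of a symplectic family in adapted coordinates with `P_qε ≠ 0` at the
origin, `ε_B''(0) = (3·Q_qq·P_qp − Q_p·P_qqq)/(3·Q_p·P_qε)` (partial derivatives at the
origin). -/
theorem B_line_second_derivative_eB
    (Q P : ℝ → ℝ → ℝ → ℝ) (U : Set (ℝ × ℝ × ℝ)) (hU : IsOpen U) (hU0 : (0, 0, 0) ∈ U)
    (hQ : ContDiffOn ℝ (⊤ : ℕ∞) (fun z : ℝ × ℝ × ℝ => Q z.1 z.2.1 z.2.2) U)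
    (hP : ContDiffOn ℝ (⊤ : ℕ∞) (fun z : ℝ × ℝ × ℝ => P z.1 z.2.1 z.2.2) U)
    (hsymp : ∀ z ∈ U, Dq Q z.1 z.2.1 z.2.2 * Dp P z.1 z.2.1 z.2.2
      - Dp Q z.1 z.2.1 z.2.2 * Dq P z.1 z.2.1 z.2.2 = 1)
    (hQ0 : Q 0 0 0 = 0) (hP0 : P 0 0 0 = 0)
    (hQq : Dq Q 0 0 0 = 1) (hPq : Dq P 0 0 0 = 0) (hPp : Dp P 0 0 0 = 1)
    (hQe : De Q 0 0 0 = 0) (hPe : De P 0 0 0 = 0) (hQp : Dp Q 0 0 0 ≠ 0)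
    (hPqe : De (Dq P) 0 0 0 ≠ 0)
    (r : ℝ) (hr : 0 < r) (pB eB : ℝ → ℝ)
    (hpB : ContDiffOn ℝ (⊤ : ℕ∞) pB (Set.Ioo (-r) r)) (heB : ContDiffOn ℝ (⊤ : ℕ∞) eB (Set.Ioo (-r) r))
    (hpB0 : pB 0 = 0) (heB0 : eB 0 = 0)
    (hpB1 : deriv pB 0 = 0) (heB1 : deriv eB 0 = 0)
    (hfixB : ∀ q ∈ Set.Ioo (-r) r,
      Q q (pB q) (eB q) = q ∧ P q (pB q) (eB q) = pB q) :
    deriv (deriv eB) 0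
      = (3 * Dq (Dq Q) 0 0 0 * Dp (Dq P) 0 0 0 - Dp Q 0 0 0 * Dq (Dq (Dq P)) 0 0 0)
        / (3 * Dp Q 0 0 0 * De (Dq P) 0 0 0) := by
  have hQ' : ContDiffOn ℝ ((⊤ : ℕ∞) : WithTop ℕ∞) (unc Q) U := hQ
  have hP' : ContDiffOn ℝ ((⊤ : ℕ∞) : WithTop ℕ∞) (unc P) U := hP
  set I := Set.Ioo (-r) r with hI
  have hIo : IsOpen I := isOpen_Ioo
  have h0I : (0:ℝ) ∈ I := ⟨by linarith, hr⟩
  have hgc : ContinuousOn (fun q : ℝ => ((q, pB q, eB q) : ℝ×ℝ×ℝ)) I :=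
    continuousOn_id.prodMk (hpB.continuousOn.prodMk heB.continuousOn)
  set V := I ∩ (fun q : ℝ => ((q, pB q, eB q) : ℝ×ℝ×ℝ)) ⁻¹' U with hV
  have hVo : IsOpen V := hgc.isOpen_inter_preimage hIo hU
  have h0V : (0:ℝ) ∈ V := ⟨h0I, by
    show ((0:ℝ), pB 0, eB 0) ∈ U
    rw [hpB0, heB0]; exact hU0⟩
  have hVI : V ⊆ I := Set.inter_subset_left
  have hVg : ∀ q ∈ V, ((q, pB q, eB q) : ℝ×ℝ×ℝ) ∈ U := fun q hq => hq.2
  -- differentiability of the curves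
  have hpBd : ∀ q ∈ V, HasDerivAt pB (deriv pB q) q := fun q hq =>
    ((hpB.differentiableOn (by norm_num)).differentiableAt (hIo.mem_nhds (hVI hq))).hasDerivAt
  have heBd : ∀ q ∈ V, HasDerivAt eB (deriv eB q) q := fun q hq =>
    ((heB.differentiableOn (by norm_num)).differentiableAt (hIo.mem_nhds (hVI hq))).hasDerivAt
  have hpBD1 : ContDiffOn ℝ ((⊤ : ℕ∞) : WithTop ℕ∞) (deriv pB) I := hpB.deriv_of_isOpen hIo (by simp)
  have heBD1 : ContDiffOn ℝ ((⊤ : ℕ∞) : WithTop ℕ∞) (deriv eB) I := heB.deriv_of_isOpen hIo (by simp)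
  have hpBD2 : ContDiffOn ℝ ((⊤ : ℕ∞) : WithTop ℕ∞) (deriv (deriv pB)) I :=
    hpBD1.deriv_of_isOpen hIo (by simp)
  have heBD2 : ContDiffOn ℝ ((⊤ : ℕ∞) : WithTop ℕ∞) (deriv (deriv eB)) I :=
    heBD1.deriv_of_isOpen hIo (by simp)
  have hpB'd : ∀ q ∈ V, HasDerivAt (deriv pB) (deriv (deriv pB) q) q := fun q hq =>
    ((hpBD1.differentiableOn (by norm_num)).differentiableAt (hIo.mem_nhds (hVI hq))).hasDerivAt
  have heB'd : ∀ q ∈ V, HasDerivAt (deriv eB) (deriv (deriv eB) q) q := fun q hq =>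
    ((heBD1.differentiableOn (by norm_num)).differentiableAt (hIo.mem_nhds (hVI hq))).hasDerivAt
  have hpB''d : ∀ q ∈ V, HasDerivAt (deriv (deriv pB)) (deriv (deriv (deriv pB)) q) q :=
    fun q hq =>
    ((hpBD2.differentiableOn (by norm_num)).differentiableAt (hIo.mem_nhds (hVI hq))).hasDerivAt
  have heB''d : ∀ q ∈ V, HasDerivAt (deriv (deriv eB)) (deriv (deriv (deriv eB)) q) q :=
    fun q hq =>
    ((heBD2.differentiableOn (by norm_num)).differentiableAt (hIo.mem_nhds (hVI hq))).hasDerivAt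
  -- the workhorse: derivative of F along the B-line
  have key : ∀ F : ℝ → ℝ → ℝ → ℝ, ContDiffOn ℝ ((⊤ : ℕ∞) : WithTop ℕ∞) (unc F) U → ∀ q ∈ V,
      HasDerivAt (fun s => F s (pB s) (eB s))
        (Dq F q (pB q) (eB q) + Dp F q (pB q) (eB q) * deriv pB q
          + De F q (pB q) (eB q) * deriv eB q) q :=
    fun F hF q hq =>
      hasDerivAt_comp3 (diffAt_of_mem hU hF (hVg q hq)) (hpBd q hq) (heBd q hq)
  -- smoothness of partials
  have hQ1q := contDiffOn_unc_Dq hU hQ'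
  have hQ1p := contDiffOn_unc_Dp hU hQ'
  have hQ1e := contDiffOn_unc_De hU hQ'
  have hP1q := contDiffOn_unc_Dq hU hP'
  have hP1p := contDiffOn_unc_Dp hU hP'
  have hP1e := contDiffOn_unc_De hU hP'
  have hP2qq := contDiffOn_unc_Dq hU hP1q
  have hP2pq := contDiffOn_unc_Dp hU hP1q
  have hP2eq := contDiffOn_unc_De hU hP1q
  have hP2qp := contDiffOn_unc_Dq hU hP1p
  have hP2pp := contDiffOn_unc_Dp hU hP1p
  have hP2ep := contDiffOn_unc_De hU hP1p
  have hP2qe := contDiffOn_unc_Dq hU hP1e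
  have hP2pe := contDiffOn_unc_Dp hU hP1e
  have hP2ee := contDiffOn_unc_De hU hP1e
  -- first-order identity for Q
  have I1Q : ∀ q ∈ V, Dq Q q (pB q) (eB q) + Dp Q q (pB q) (eB q) * deriv pB q
      + De Q q (pB q) (eB q) * deriv eB q = 1 := by
    intro q hq
    have hev : (fun s => Q s (pB s) (eB s)) =ᶠ[𝓝 q] (fun s => s) := by
      filter_upwards [hVo.mem_nhds hq] with s hs using (hfixB s (hVI hs)).1
    have h := ((key Q hQ' q hq).deriv.symm.trans hev.deriv_eq)
    simpa using h
  -- first-order identity for P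
  have I1P : ∀ q ∈ V, Dq P q (pB q) (eB q) + Dp P q (pB q) (eB q) * deriv pB q
      + De P q (pB q) (eB q) * deriv eB q = deriv pB q := by
    intro q hq
    have hev : (fun s => P s (pB s) (eB s)) =ᶠ[𝓝 q] pB := by
      filter_upwards [hVo.mem_nhds hq] with s hs using (hfixB s (hVI hs)).2
    exact (key P hP' q hq).deriv.symm.trans hev.deriv_eq
  -- second-order identity for P, valid on all of V
  have I2P : ∀ q ∈ V,
      (Dq (Dq P) q (pB q) (eB q) + Dp (Dq P) q (pB q) (eB q) * deriv pB q
        + De (Dq P) q (pB q) (eB q) * deriv eB q)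
      + ((Dq (Dp P) q (pB q) (eB q) + Dp (Dp P) q (pB q) (eB q) * deriv pB q
          + De (Dp P) q (pB q) (eB q) * deriv eB q) * deriv pB q
        + Dp P q (pB q) (eB q) * deriv (deriv pB) q)
      + ((Dq (De P) q (pB q) (eB q) + Dp (De P) q (pB q) (eB q) * deriv pB q
          + De (De P) q (pB q) (eB q) * deriv eB q) * deriv eB q
        + De P q (pB q) (eB q) * deriv (deriv eB) q)
      = deriv (deriv pB) q := by
    intro q hq
    have hL := ((key (Dq P) hP1q q hq).add
      ((key (Dp P) hP1p q hq).mul (hpB'd q hq))).add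
      ((key (De P) hP1e q hq).mul (heB'd q hq))
    have hev : (fun s => Dq P s (pB s) (eB s) + Dp P s (pB s) (eB s) * deriv pB s
        + De P s (pB s) (eB s) * deriv eB s) =ᶠ[𝓝 q] deriv pB := by
      filter_upwards [hVo.mem_nhds hq] with s hs using I1P s hs
    exact hL.deriv.symm.trans hev.deriv_eq
  -- differentiate I1Q at 0
  have hLQ := ((key (Dq Q) hQ1q 0 h0V).add
    ((key (Dp Q) hQ1p 0 h0V).mul (hpB'd 0 h0V))).add
    ((key (De Q) hQ1e 0 h0V).mul (heB'd 0 h0V))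
  have hevQ : (fun s => Dq Q s (pB s) (eB s) + Dp Q s (pB s) (eB s) * deriv pB s
      + De Q s (pB s) (eB s) * deriv eB s) =ᶠ[𝓝 0] (fun _ => (1:ℝ)) := by
    filter_upwards [hVo.mem_nhds h0V] with s hs using I1Q s hs
  have EQ := hLQ.deriv.symm.trans hevQ.deriv_eq
  simp only [hpB0, heB0, hpB1, heB1, hQe, mul_zero, zero_mul, add_zero, zero_add,
    deriv_const] at EQ
  -- EQ : Dq (Dq Q) 0 0 0 + Dp Q 0 0 0 * deriv (deriv pB) 0 = 0
  -- differentiate I2P at 0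
  have hL2 :=
    ((((key (Dq (Dq P)) hP2qq 0 h0V).add
        ((key (Dp (Dq P)) hP2pq 0 h0V).mul (hpB'd 0 h0V))).add
        ((key (De (Dq P)) hP2eq 0 h0V).mul (heB'd 0 h0V))).add
      (((((key (Dq (Dp P)) hP2qp 0 h0V).add
          ((key (Dp (Dp P)) hP2pp 0 h0V).mul (hpB'd 0 h0V))).add
          ((key (De (Dp P)) hP2ep 0 h0V).mul (heB'd 0 h0V))).mul (hpB'd 0 h0V)).add
        ((key (Dp P) hP1p 0 h0V).mul (hpB''d 0 h0V)))).add
      (((((key (Dq (De P)) hP2qe 0 h0V).add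
          ((key (Dp (De P)) hP2pe 0 h0V).mul (hpB'd 0 h0V))).add
          ((key (De (De P)) hP2ee 0 h0V).mul (heB'd 0 h0V))).mul (heB'd 0 h0V)).add
        ((key (De P) hP1e 0 h0V).mul (heB''d 0 h0V)))
  have hev2 : (fun s =>
      (Dq (Dq P) s (pB s) (eB s) + Dp (Dq P) s (pB s) (eB s) * deriv pB s
        + De (Dq P) s (pB s) (eB s) * deriv eB s)
      + ((Dq (Dp P) s (pB s) (eB s) + Dp (Dp P) s (pB s) (eB s) * deriv pB s
          + De (Dp P) s (pB s) (eB s) * deriv eB s) * deriv pB s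
        + Dp P s (pB s) (eB s) * deriv (deriv pB) s)
      + ((Dq (De P) s (pB s) (eB s) + Dp (De P) s (pB s) (eB s) * deriv pB s
          + De (De P) s (pB s) (eB s) * deriv eB s) * deriv eB s
        + De P s (pB s) (eB s) * deriv (deriv eB) s)) =ᶠ[𝓝 0] deriv (deriv pB) := by
    filter_upwards [hVo.mem_nhds h0V] with s hs using I2P s hs
  have E2 := hL2.deriv.symm.trans hev2.deriv_eq
  simp only [hpB0, heB0, hpB1, heB1, hPp, hPe, mul_zero, zero_mul, add_zero, zero_add,
    mul_one, one_mul, Pi.add_apply, Pi.mul_apply] at E2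
  -- Clairaut
  have hC1 : Dq (Dp P) 0 0 0 = Dp (Dq P) 0 0 0 := (clairaut_qp hU hP' hU0).symm
  have hC2 : Dq (De P) 0 0 0 = De (Dq P) 0 0 0 := (clairaut_qe hU hP' hU0).symm
  rw [hC1, hC2] at E2
  -- final algebra
  have hden : (3 : ℝ) * Dp Q 0 0 0 * De (Dq P) 0 0 0 ≠ 0 :=
    mul_ne_zero (mul_ne_zero three_ne_zero hQp) hPqe
  rw [eq_div_iff hden]
  linear_combination (Dp Q 0 0 0) * E2 + (-(3 * Dp (Dq P) 0 0 0)) * EQ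
end

section
/- (Corollary to Proposition 4.) Let (Q,P) be a symplectic family with a fixed point at the origin in adapted coordinates whose bifurcation is an indefinite (cross-) bifurcation which is not transcritical, i.e. P_qq·P_εε − P_qε² < 0 and P_qq = 0 at the origin, and let (p_B, ε_B) be a B-line. Then the bifurcation is fork-like, i.e. ε_B''(0) ≠ 0, if and only if 3·Q_qq·P_qp ≠ Q_p·P_qqq at the origin. -/
open Set Filter Topology ContDiff

noncomputable def D1 (F : ℝ × ℝ × ℝ → ℝ) (z : ℝ × ℝ × ℝ) : ℝ := fderiv ℝ F z (1, 0, 0)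
noncomputable def D2 (F : ℝ × ℝ × ℝ → ℝ) (z : ℝ × ℝ × ℝ) : ℝ := fderiv ℝ F z (0, 1, 0)
noncomputable def D3 (F : ℝ × ℝ × ℝ → ℝ) (z : ℝ × ℝ × ℝ) : ℝ := fderiv ℝ F z (0, 0, 1)

lemma diffAt_of_cdo {U : Set (ℝ × ℝ × ℝ)} (hU : IsOpen U) {F : ℝ × ℝ × ℝ → ℝ}
    (hF : ContDiffOn ℝ ∞ F U) {z : ℝ × ℝ × ℝ} (hz : z ∈ U) : DifferentiableAt ℝ F z :=
  (hF.differentiableOn (by simp)).differentiableAt (hU.mem_nhds hz)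

lemma cdo_D1 {U : Set (ℝ × ℝ × ℝ)} (hU : IsOpen U) {F : ℝ × ℝ × ℝ → ℝ}
    (hF : ContDiffOn ℝ ∞ F U) : ContDiffOn ℝ ∞ (D1 F) U :=
  (hF.fderiv_of_isOpen hU (le_of_eq rfl)).clm_apply contDiffOn_const

lemma cdo_D2 {U : Set (ℝ × ℝ × ℝ)} (hU : IsOpen U) {F : ℝ × ℝ × ℝ → ℝ}
    (hF : ContDiffOn ℝ ∞ F U) : ContDiffOn ℝ ∞ (D2 F) U :=
  (hF.fderiv_of_isOpen hU (le_of_eq rfl)).clm_apply contDiffOn_const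

lemma cdo_D3 {U : Set (ℝ × ℝ × ℝ)} (hU : IsOpen U) {F : ℝ × ℝ × ℝ → ℝ}
    (hF : ContDiffOn ℝ ∞ F U) : ContDiffOn ℝ ∞ (D3 F) U :=
  (hF.fderiv_of_isOpen hU (le_of_eq rfl)).clm_apply contDiffOn_const

lemma curveDeriv {F : ℝ × ℝ × ℝ → ℝ} {f g : ℝ → ℝ} {f' g' q : ℝ}
    (hF : DifferentiableAt ℝ F (q, f q, g q))
    (hf : HasDerivAt f f' q) (hg : HasDerivAt g g' q) :
    HasDerivAt (fun s => F (s, f s, g s))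
      (D1 F (q, f q, g q) + D2 F (q, f q, g q) * f' + D3 F (q, f q, g q) * g') q := by
  have h1 : HasDerivAt (fun s : ℝ => (s, f s, g s)) ((1 : ℝ), f', g') q :=
    (hasDerivAt_id q).prodMk (hf.prodMk hg)
  have h2 : HasDerivAt (fun s => F (s, f s, g s))
      (fderiv ℝ F (q, f q, g q) ((1 : ℝ), f', g')) q :=
    hF.hasFDerivAt.comp_hasDerivAt q h1
  convert h2 using 1
  have hv : ((1 : ℝ), f', g') = (1 : ℝ) • ((1 : ℝ), (0 : ℝ), (0 : ℝ))
      + f' • ((0 : ℝ), (1 : ℝ), (0 : ℝ)) + g' • ((0 : ℝ), (0 : ℝ), (1 : ℝ)) := by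
    simp [Prod.ext_iff]
  rw [hv, map_add, map_add, map_smul, map_smul, map_smul]
  simp [D1, D2, D3, smul_eq_mul]
  ring

lemma slice1 {F : ℝ × ℝ × ℝ → ℝ} {q p e : ℝ} (hF : DifferentiableAt ℝ F (q, p, e)) :
    HasDerivAt (fun s => F (s, p, e)) (D1 F (q, p, e)) q := by
  have := curveDeriv (f := fun _ => p) (g := fun _ => e) (f' := 0) (g' := 0)
    hF (hasDerivAt_const q p) (hasDerivAt_const q e)
  simpa using this

lemma slice2 {F : ℝ × ℝ × ℝ → ℝ} {q p e : ℝ} (hF : DifferentiableAt ℝ F (q, p, e)) :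
    HasDerivAt (fun s => F (q, s, e)) (D2 F (q, p, e)) p := by
  have h1 : HasDerivAt (fun s : ℝ => (q, s, e)) ((0 : ℝ), (1 : ℝ), (0 : ℝ)) p :=
    (hasDerivAt_const p q).prodMk ((hasDerivAt_id p).prodMk (hasDerivAt_const p e))
  exact hF.hasFDerivAt.comp_hasDerivAt p h1

lemma slice3 {F : ℝ × ℝ × ℝ → ℝ} {q p e : ℝ} (hF : DifferentiableAt ℝ F (q, p, e)) :
    HasDerivAt (fun s => F (q, p, s)) (D3 F (q, p, e)) e := by
  have h1 : HasDerivAt (fun s : ℝ => (q, p, s)) ((0 : ℝ), (0 : ℝ), (1 : ℝ)) e :=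
    (hasDerivAt_const e q).prodMk ((hasDerivAt_const e p).prodMk (hasDerivAt_id e))
  exact hF.hasFDerivAt.comp_hasDerivAt e h1

/-- symmetry of second directional derivatives -/
lemma sym2 {U : Set (ℝ × ℝ × ℝ)} (hU : IsOpen U) {F : ℝ × ℝ × ℝ → ℝ}
    (hF : ContDiffOn ℝ ∞ F U) {z : ℝ × ℝ × ℝ} (hz : z ∈ U) (v w : ℝ × ℝ × ℝ) :
    fderiv ℝ (fun y => fderiv ℝ F y v) z w = fderiv ℝ (fun y => fderiv ℝ F y w) z v := by
  set F' := fderiv ℝ F with hF'def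
  have hdF : ∀ᶠ y in 𝓝 z, HasFDerivAt F (F' y) y := by
    filter_upwards [hU.mem_nhds hz] with y hy
    exact (diffAt_of_cdo hU hF hy).hasFDerivAt
  have hF' : ContDiffOn ℝ ∞ F' U := hF.fderiv_of_isOpen hU (le_of_eq rfl)
  have hdF' : DifferentiableAt ℝ F' z :=
    ((hF'.differentiableOn (by simp)).differentiableAt (hU.mem_nhds hz))
  have hsym := second_derivative_symmetric_of_eventually hdF hdF'.hasFDerivAt v w
  have h1 : ∀ u w' : ℝ × ℝ × ℝ, fderiv ℝ (fun y => F' y u) z w' = fderiv ℝ F' z w' u := by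
    intro u w'
    have hcomp : HasFDerivAt (fun y => F' y u)
        ((ContinuousLinearMap.apply ℝ ℝ u).comp (fderiv ℝ F' z)) z :=
      (ContinuousLinearMap.apply ℝ ℝ u).hasFDerivAt.comp z hdF'.hasFDerivAt
    rw [hcomp.fderiv]
    simp
  rw [h1 v w, h1 w v]
  exact hsym.symm

lemma Dq_congr {U : Set (ℝ × ℝ × ℝ)} (hU : IsOpen U) {g : ℝ → ℝ → ℝ → ℝ}
    {G : ℝ × ℝ × ℝ → ℝ} (hG : ContDiffOn ℝ ∞ G U)
    (hag : ∀ z ∈ U, g z.1 z.2.1 z.2.2 = G z) {z : ℝ × ℝ × ℝ} (hz : z ∈ U) :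
    Dq g z.1 z.2.1 z.2.2 = D1 G z := by
  obtain ⟨q, p, e⟩ := z
  have hev : (fun s => g s p e) =ᶠ[𝓝 q] (fun s => G (s, p, e)) := by
    have hmem : ∀ᶠ s in 𝓝 q, (s, p, e) ∈ U :=
      ((continuous_id.prodMk continuous_const).continuousAt).preimage_mem_nhds
        (hU.mem_nhds hz)
    filter_upwards [hmem] with s hs using hag (s, p, e) hs
  exact (hev.deriv_eq).trans (slice1 (diffAt_of_cdo hU hG hz)).deriv

lemma Dp_congr {U : Set (ℝ × ℝ × ℝ)} (hU : IsOpen U) {g : ℝ → ℝ → ℝ → ℝ}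
    {G : ℝ × ℝ × ℝ → ℝ} (hG : ContDiffOn ℝ ∞ G U)
    (hag : ∀ z ∈ U, g z.1 z.2.1 z.2.2 = G z) {z : ℝ × ℝ × ℝ} (hz : z ∈ U) :
    Dp g z.1 z.2.1 z.2.2 = D2 G z := by
  obtain ⟨q, p, e⟩ := z
  have hev : (fun s => g q s e) =ᶠ[𝓝 p] (fun s => G (q, s, e)) := by
    have hmem : ∀ᶠ s in 𝓝 p, (q, s, e) ∈ U :=
      ((continuous_const.prodMk (continuous_id.prodMk continuous_const)).continuousAt).preimage_mem_nhds
        (hU.mem_nhds hz)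
    filter_upwards [hmem] with s hs using hag (q, s, e) hs
  exact (hev.deriv_eq).trans (slice2 (diffAt_of_cdo hU hG hz)).deriv

lemma De_congr {U : Set (ℝ × ℝ × ℝ)} (hU : IsOpen U) {g : ℝ → ℝ → ℝ → ℝ}
    {G : ℝ × ℝ × ℝ → ℝ} (hG : ContDiffOn ℝ ∞ G U)
    (hag : ∀ z ∈ U, g z.1 z.2.1 z.2.2 = G z) {z : ℝ × ℝ × ℝ} (hz : z ∈ U) :
    De g z.1 z.2.1 z.2.2 = D3 G z := by
  obtain ⟨q, p, e⟩ := z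
  have hev : (fun s => g q p s) =ᶠ[𝓝 e] (fun s => G (q, p, s)) := by
    have hmem : ∀ᶠ s in 𝓝 e, (q, p, s) ∈ U :=
      ((continuous_const.prodMk (continuous_const.prodMk continuous_id)).continuousAt).preimage_mem_nhds
        (hU.mem_nhds hz)
    filter_upwards [hmem] with s hs using hag (q, p, s) hs
  exact (hev.deriv_eq).trans (slice3 (diffAt_of_cdo hU hG hz)).deriv

/-- **Corollary to Proposition 4.**  A non-transcritical cross-bifurcation
(`P_qq·P_εε − P_qε² < 0` and `P_qq = 0` at the origin) is fork-like (`ε_B''(0) ≠ 0`)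
if and only if `3·Q_qq·P_qp ≠ Q_p·P_qqq` at the origin in adapted coordinates. -/
theorem fork_like_iff
    (Q P : ℝ → ℝ → ℝ → ℝ) (U : Set (ℝ × ℝ × ℝ)) (hU : IsOpen U) (hU0 : (0, 0, 0) ∈ U)
    (hQ : ContDiffOn ℝ (⊤ : ℕ∞) (fun z : ℝ × ℝ × ℝ => Q z.1 z.2.1 z.2.2) U)
    (hP : ContDiffOn ℝ (⊤ : ℕ∞) (fun z : ℝ × ℝ × ℝ => P z.1 z.2.1 z.2.2) U)
    (hsymp : ∀ z ∈ U, Dq Q z.1 z.2.1 z.2.2 * Dp P z.1 z.2.1 z.2.2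
      - Dp Q z.1 z.2.1 z.2.2 * Dq P z.1 z.2.1 z.2.2 = 1)
    (hQ0 : Q 0 0 0 = 0) (hP0 : P 0 0 0 = 0)
    (hQq : Dq Q 0 0 0 = 1) (hPq : Dq P 0 0 0 = 0) (hPp : Dp P 0 0 0 = 1)
    (hQe : De Q 0 0 0 = 0) (hPe : De P 0 0 0 = 0) (hQp : Dp Q 0 0 0 ≠ 0)
    (hindef : Dq (Dq P) 0 0 0 * De (De P) 0 0 0 - (De (Dq P) 0 0 0) ^ 2 < 0)
    (hPqq : Dq (Dq P) 0 0 0 = 0)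
    (r : ℝ) (hr : 0 < r) (pB eB : ℝ → ℝ)
    (hpB : ContDiffOn ℝ (⊤ : ℕ∞) pB (Set.Ioo (-r) r)) (heB : ContDiffOn ℝ (⊤ : ℕ∞) eB (Set.Ioo (-r) r))
    (hpB0 : pB 0 = 0) (heB0 : eB 0 = 0)
    (hpB1 : deriv pB 0 = 0) (heB1 : deriv eB 0 = 0)
    (hfixB : ∀ q ∈ Set.Ioo (-r) r,
      Q q (pB q) (eB q) = q ∧ P q (pB q) (eB q) = pB q) :
    deriv (deriv eB) 0 ≠ 0 ↔
      3 * Dq (Dq Q) 0 0 0 * Dp (Dq P) 0 0 0 ≠ Dp Q 0 0 0 * Dq (Dq (Dq P)) 0 0 0 := by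
  set FQ : ℝ × ℝ × ℝ → ℝ := fun z => Q z.1 z.2.1 z.2.2 with hFQ
  set FP : ℝ × ℝ × ℝ → ℝ := fun z => P z.1 z.2.1 z.2.2 with hFP
  have hQi : ContDiffOn ℝ ∞ FQ U := hQ.of_le (by simp)
  have hPi : ContDiffOn ℝ ∞ FP U := hP.of_le (by simp)
  have h0r : (0 : ℝ) ∈ Ioo (-r) r := by constructor <;> simp [hr]
  -- shrink to a neighborhood mapped into U
  have hγc : ContinuousOn (fun q : ℝ => (q, pB q, eB q)) (Ioo (-r) r) :=
    (continuousOn_id.prodMk ((hpB.continuousOn).prodMk (heB.continuousOn)))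
  have hVopen : IsOpen (Ioo (-r) r ∩ (fun q : ℝ => (q, pB q, eB q)) ⁻¹' U) :=
    hγc.isOpen_inter_preimage isOpen_Ioo hU
  have h0V : (0 : ℝ) ∈ Ioo (-r) r ∩ (fun q : ℝ => (q, pB q, eB q)) ⁻¹' U := by
    refine ⟨h0r, ?_⟩
    show ((0 : ℝ), pB 0, eB 0) ∈ U
    rw [hpB0, heB0]; exact hU0
  obtain ⟨δ, hδpos, hδball⟩ := Metric.isOpen_iff.1 hVopen 0 h0V
  have hIsub : ∀ q ∈ Ioo (-δ) δ, q ∈ Ioo (-r) r ∧ (q, pB q, eB q) ∈ U := by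
    intro q hq
    have hq' : q ∈ Metric.ball (0 : ℝ) δ := by
      rw [Real.ball_eq_Ioo]; simpa using hq
    exact hδball hq'
  have h0I : (0 : ℝ) ∈ Ioo (-δ) δ := by constructor <;> simp [hδpos]
  have hIopen : IsOpen (Ioo (-δ) δ) := isOpen_Ioo
  -- derivatives of pB, eB
  have hpBi : ContDiffOn ℝ ∞ pB (Ioo (-r) r) := hpB.of_le (by simp)
  have heBi : ContDiffOn ℝ ∞ eB (Ioo (-r) r) := heB.of_le (by simp)
  have hpB' : ContDiffOn ℝ ∞ (deriv pB) (Ioo (-r) r) :=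
    hpBi.deriv_of_isOpen isOpen_Ioo (le_of_eq rfl)
  have heB' : ContDiffOn ℝ ∞ (deriv eB) (Ioo (-r) r) :=
    heBi.deriv_of_isOpen isOpen_Ioo (le_of_eq rfl)
  have hpB'' : ContDiffOn ℝ ∞ (deriv (deriv pB)) (Ioo (-r) r) :=
    hpB'.deriv_of_isOpen isOpen_Ioo (le_of_eq rfl)
  have heB'' : ContDiffOn ℝ ∞ (deriv (deriv eB)) (Ioo (-r) r) :=
    heB'.deriv_of_isOpen isOpen_Ioo (le_of_eq rfl)
  have dAt : ∀ f : ℝ → ℝ, ContDiffOn ℝ ∞ f (Ioo (-r) r) → ∀ q ∈ Ioo (-δ) δ,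
      HasDerivAt f (deriv f q) q := by
    intro f hf q hq
    exact ((hf.differentiableOn (by simp)).differentiableAt
      (isOpen_Ioo.mem_nhds (hIsub q hq).1)).hasDerivAt
  -- chain rule along the B-line
  have key : ∀ G : ℝ × ℝ × ℝ → ℝ, ContDiffOn ℝ ∞ G U → ∀ q ∈ Ioo (-δ) δ,
      HasDerivAt (fun s => G (s, pB s, eB s))
        (D1 G (q, pB q, eB q) + D2 G (q, pB q, eB q) * deriv pB q
          + D3 G (q, pB q, eB q) * deriv eB q) q := by
    intro G hG q hq
    exact curveDeriv (diffAt_of_cdo hU hG (hIsub q hq).2)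
      (dAt pB hpBi q hq) (dAt eB heBi q hq)
  -- first identities
  have id1 : ∀ q ∈ Ioo (-δ) δ,
      D1 FQ (q, pB q, eB q) + D2 FQ (q, pB q, eB q) * deriv pB q
        + D3 FQ (q, pB q, eB q) * deriv eB q = 1 := by
    intro q hq
    have h1 := key FQ hQi q hq
    have h2 : (fun s : ℝ => s) =ᶠ[𝓝 q] fun s => FQ (s, pB s, eB s) := by
      filter_upwards [hIopen.mem_nhds hq] with s hs
      exact ((hfixB s (hIsub s hs).1).1).symm
    exact (h1.congr_of_eventuallyEq h2).unique (hasDerivAt_id q)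
  have id2 : ∀ q ∈ Ioo (-δ) δ,
      D1 FP (q, pB q, eB q) + D2 FP (q, pB q, eB q) * deriv pB q
        + D3 FP (q, pB q, eB q) * deriv eB q = deriv pB q := by
    intro q hq
    have h1 := key FP hPi q hq
    have h2 : pB =ᶠ[𝓝 q] fun s => FP (s, pB s, eB s) := by
      filter_upwards [hIopen.mem_nhds hq] with s hs
      exact ((hfixB s (hIsub s hs).1).2).symm
    exact (h1.congr_of_eventuallyEq h2).unique (dAt pB hpBi q hq)
  have hγ00 : ((0 : ℝ), pB 0, eB 0) = ((0 : ℝ), (0 : ℝ), (0 : ℝ)) := by rw [hpB0, heB0]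
  -- second derivative of the Q-identity at 0
  have E1 : D1 (D1 FQ) (0, 0, 0) + D2 FQ (0, 0, 0) * deriv (deriv pB) 0
      + D3 FQ (0, 0, 0) * deriv (deriv eB) 0 = 0 := by
    have hA := key (D1 FQ) (cdo_D1 hU hQi) 0 h0I
    have hB := (key (D2 FQ) (cdo_D2 hU hQi) 0 h0I).mul (dAt (deriv pB) hpB' 0 h0I)
    have hC := (key (D3 FQ) (cdo_D3 hU hQi) 0 h0I).mul (dAt (deriv eB) heB' 0 h0I)
    have hsum := (hA.add hB).add hC
    have h2 : (fun _ : ℝ => (1 : ℝ)) =ᶠ[𝓝 (0 : ℝ)] fun s =>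
        D1 FQ (s, pB s, eB s) + D2 FQ (s, pB s, eB s) * deriv pB s
          + D3 FQ (s, pB s, eB s) * deriv eB s := by
      filter_upwards [hIopen.mem_nhds h0I] with s hs using (id1 s hs).symm
    have hval := (hsum.congr_of_eventuallyEq h2).unique (hasDerivAt_const 0 (1 : ℝ))
    rw [hγ00, hpB1, heB1] at hval
    linear_combination hval
  -- conversions between Dq/Dp/De and D1/D2/D3
  have agQ0 : ∀ z ∈ U, Q z.1 z.2.1 z.2.2 = FQ z := fun z _ => rfl
  have agP0 : ∀ z ∈ U, P z.1 z.2.1 z.2.2 = FP z := fun z _ => rfl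
  have agQ1 : ∀ z ∈ U, Dq Q z.1 z.2.1 z.2.2 = D1 FQ z :=
    fun z hz => Dq_congr hU hQi agQ0 hz
  have agP1 : ∀ z ∈ U, Dq P z.1 z.2.1 z.2.2 = D1 FP z :=
    fun z hz => Dq_congr hU hPi agP0 hz
  have agP2 : ∀ z ∈ U, Dq (Dq P) z.1 z.2.1 z.2.2 = D1 (D1 FP) z :=
    fun z hz => Dq_congr hU (cdo_D1 hU hPi) agP1 hz
  have cQp : Dp Q 0 0 0 = D2 FQ (0, 0, 0) := Dp_congr hU hQi agQ0 hU0
  have cQe : D3 FQ (0, 0, 0) = 0 := (De_congr hU hQi agQ0 hU0).symm.trans hQe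
  have cPp : D2 FP (0, 0, 0) = 1 := (Dp_congr hU hPi agP0 hU0).symm.trans hPp
  have cPe : D3 FP (0, 0, 0) = 0 := (De_congr hU hPi agP0 hU0).symm.trans hPe
  have cQqq : Dq (Dq Q) 0 0 0 = D1 (D1 FQ) (0, 0, 0) :=
    Dq_congr hU (cdo_D1 hU hQi) agQ1 hU0
  have cPqp : Dp (Dq P) 0 0 0 = D2 (D1 FP) (0, 0, 0) :=
    Dp_congr hU (cdo_D1 hU hPi) agP1 hU0
  have cPqe : De (Dq P) 0 0 0 = D3 (D1 FP) (0, 0, 0) :=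
    De_congr hU (cdo_D1 hU hPi) agP1 hU0
  have cPqqq : Dq (Dq (Dq P)) 0 0 0 = D1 (D1 (D1 FP)) (0, 0, 0) :=
    Dq_congr hU (cdo_D1 hU (cdo_D1 hU hPi)) agP2 hU0
  -- second derivative identity for P on the whole interval
  have id3 : ∀ q ∈ Ioo (-δ) δ,
      (D1 (D1 FP) (q, pB q, eB q) + D2 (D1 FP) (q, pB q, eB q) * deriv pB q
        + D3 (D1 FP) (q, pB q, eB q) * deriv eB q)
      + ((D1 (D2 FP) (q, pB q, eB q) + D2 (D2 FP) (q, pB q, eB q) * deriv pB q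
        + D3 (D2 FP) (q, pB q, eB q) * deriv eB q) * deriv pB q
          + D2 FP (q, pB q, eB q) * deriv (deriv pB) q)
      + ((D1 (D3 FP) (q, pB q, eB q) + D2 (D3 FP) (q, pB q, eB q) * deriv pB q
        + D3 (D3 FP) (q, pB q, eB q) * deriv eB q) * deriv eB q
          + D3 FP (q, pB q, eB q) * deriv (deriv eB) q)
      = deriv (deriv pB) q := by
    intro q hq
    have hA := key (D1 FP) (cdo_D1 hU hPi) q hq
    have hB := ((key (D2 FP) (cdo_D2 hU hPi) q hq).mul (dAt (deriv pB) hpB' q hq))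
    have hC := ((key (D3 FP) (cdo_D3 hU hPi) q hq).mul (dAt (deriv eB) heB' q hq))
    have hsum := (hA.add hB).add hC
    have h2 : deriv pB =ᶠ[𝓝 q] fun s =>
        D1 FP (s, pB s, eB s) + D2 FP (s, pB s, eB s) * deriv pB s
          + D3 FP (s, pB s, eB s) * deriv eB s := by
      filter_upwards [hIopen.mem_nhds hq] with s hs using (id2 s hs).symm
    exact (hsum.congr_of_eventuallyEq h2).unique (dAt (deriv pB) hpB' q hq)
  -- third derivative of the P-identity at 0
  have E2 : D1 (D1 (D1 FP)) (0, 0, 0)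
      + (D2 (D1 FP) (0, 0, 0) + 2 * D1 (D2 FP) (0, 0, 0)) * deriv (deriv pB) 0
      + (D3 (D1 FP) (0, 0, 0) + 2 * D1 (D3 FP) (0, 0, 0)) * deriv (deriv eB) 0 = 0 := by
    have hp2 := dAt (deriv pB) hpB' 0 h0I
    have he2 := dAt (deriv eB) heB' 0 h0I
    have hp3 := dAt (deriv (deriv pB)) hpB'' 0 h0I
    have he3 := dAt (deriv (deriv eB)) heB'' 0 h0I
    have hT1 := ((key (D1 (D1 FP)) (cdo_D1 hU (cdo_D1 hU hPi)) 0 h0I).add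
      ((key (D2 (D1 FP)) (cdo_D2 hU (cdo_D1 hU hPi)) 0 h0I).mul hp2)).add
      ((key (D3 (D1 FP)) (cdo_D3 hU (cdo_D1 hU hPi)) 0 h0I).mul he2)
    have hT2a := ((key (D1 (D2 FP)) (cdo_D1 hU (cdo_D2 hU hPi)) 0 h0I).add
      ((key (D2 (D2 FP)) (cdo_D2 hU (cdo_D2 hU hPi)) 0 h0I).mul hp2)).add
      ((key (D3 (D2 FP)) (cdo_D3 hU (cdo_D2 hU hPi)) 0 h0I).mul he2)
    have hT3a := ((key (D1 (D3 FP)) (cdo_D1 hU (cdo_D3 hU hPi)) 0 h0I).add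
      ((key (D2 (D3 FP)) (cdo_D2 hU (cdo_D3 hU hPi)) 0 h0I).mul hp2)).add
      ((key (D3 (D3 FP)) (cdo_D3 hU (cdo_D3 hU hPi)) 0 h0I).mul he2)
    have hT2 := hT2a.mul hp2
    have hT2b := (key (D2 FP) (cdo_D2 hU hPi) 0 h0I).mul hp3
    have hT3 := hT3a.mul he2
    have hT3b := (key (D3 FP) (cdo_D3 hU hPi) 0 h0I).mul he3
    have hW := (hT1.add (hT2.add hT2b)).add (hT3.add hT3b)
    have h2 : deriv (deriv pB) =ᶠ[𝓝 (0 : ℝ)] fun s =>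
        (D1 (D1 FP) (s, pB s, eB s) + D2 (D1 FP) (s, pB s, eB s) * deriv pB s
          + D3 (D1 FP) (s, pB s, eB s) * deriv eB s)
        + ((D1 (D2 FP) (s, pB s, eB s) + D2 (D2 FP) (s, pB s, eB s) * deriv pB s
          + D3 (D2 FP) (s, pB s, eB s) * deriv eB s) * deriv pB s
            + D2 FP (s, pB s, eB s) * deriv (deriv pB) s)
        + ((D1 (D3 FP) (s, pB s, eB s) + D2 (D3 FP) (s, pB s, eB s) * deriv pB s
          + D3 (D3 FP) (s, pB s, eB s) * deriv eB s) * deriv eB s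
            + D3 FP (s, pB s, eB s) * deriv (deriv eB) s) := by
      filter_upwards [hIopen.mem_nhds h0I] with s hs using (id3 s hs).symm
    have hval := (hW.congr_of_eventuallyEq h2).unique hp3
    rw [hγ00, hpB1, heB1, cPp, cPe] at hval
    have sy2 : D1 (D2 FP) (0, 0, 0) = D2 (D1 FP) (0, 0, 0) :=
      sym2 hU hPi hU0 (0, 1, 0) (1, 0, 0)
    have sy3 : D1 (D3 FP) (0, 0, 0) = D3 (D1 FP) (0, 0, 0) :=
      sym2 hU hPi hU0 (0, 0, 1) (1, 0, 0)
    simp only [Pi.add_apply, Pi.mul_apply, hpB0, heB0, hpB1, heB1] at hval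
    linear_combination hval
  -- nonvanishing of P_qε and Q_p
  have hPqe : D3 (D1 FP) (0, 0, 0) ≠ 0 := by
    intro h
    rw [hPqq, cPqe, h] at hindef
    norm_num at hindef
  have ha : D2 FQ (0, 0, 0) ≠ 0 := by rw [← cQp]; exact hQp
  rw [cQe] at E1
  have sy2 : D1 (D2 FP) (0, 0, 0) = D2 (D1 FP) (0, 0, 0) :=
    sym2 hU hPi hU0 (0, 1, 0) (1, 0, 0)
  have sy3 : D1 (D3 FP) (0, 0, 0) = D3 (D1 FP) (0, 0, 0) :=
    sym2 hU hPi hU0 (0, 0, 1) (1, 0, 0)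
  rw [sy2, sy3] at E2
  have hkey : 3 * D1 (D1 FQ) (0, 0, 0) * D2 (D1 FP) (0, 0, 0)
      - D2 FQ (0, 0, 0) * D1 (D1 (D1 FP)) (0, 0, 0)
      = 3 * D2 FQ (0, 0, 0) * D3 (D1 FP) (0, 0, 0) * deriv (deriv eB) 0 := by
    linear_combination 3 * D2 (D1 FP) (0, 0, 0) * E1 - D2 FQ (0, 0, 0) * E2
  rw [cQqq, cPqp, cPqqq, cQp]
  constructor
  · intro h hc
    apply h
    have h0 : 3 * D2 FQ (0, 0, 0) * D3 (D1 FP) (0, 0, 0) * deriv (deriv eB) 0 = 0 := by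
      rw [← hkey, hc, sub_self]
    have h3 : (3 : ℝ) * D2 FQ (0, 0, 0) * D3 (D1 FP) (0, 0, 0) ≠ 0 :=
      mul_ne_zero (mul_ne_zero three_ne_zero ha) hPqe
    exact (mul_eq_zero.mp h0).resolve_left h3
  · intro h he2
    apply h
    rw [he2, mul_zero] at hkey
    linarith [hkey]
end
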